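/- Let Ω ⊂ ℝ^n be bounded, 1 ≤ p ≤ ∞, μ a signed Radon measure on the closure of Ω, and ζ ∈ L^p(Ω). Then the positive part μ_+ (in the Jordan decomposition) is absolutely continuous with density in L^p(Ω) if and only if (μ + ζ)_+ is absolutely continuous with density in L^p(Ω); moreover ‖(μ+ζ)_+‖_{L^p} ≤ ‖μ_+‖_{L^p} + ‖ζ_+‖_{L^p}. -/

import Mathlib

/-!
Write `w = ζ dx` on `Ω`. Since the positive Jordan part is the smallest measure
dominating a signed measure on every set, `w ≤ (ζ₊ dx)` gives `(μ + w)₊ ≤ μ₊ + ζ₊ dx`, and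
symmetrically `μ₊ ≤ (μ + w)₊ + ζ₋ dx`. Domination of finite measures passes to their
Radon–Nikodym densities almost everywhere, hence to absolute continuity, `L^p` membership
and, by Minkowski, to the `L^p` norm.
-/

open MeasureTheory Set
open scoped ENNReal

/-- "The positive part of the signed measure `ν` is absolutely continuous with
respect to Lebesgue measure with an `L^p` Radon–Nikodym density." -/
def posPartInLp {n : ℕ} (ν : MeasureTheory.SignedMeasure (EuclideanSpace ℝ (Fin n)))
    (p : ℝ≥0∞) : Prop :=
  ν.toJordanDecomposition.posPart ≪ (volume : Measure (EuclideanSpace ℝ (Fin n))) ∧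
    MemLp (fun x => (ν.toJordanDecomposition.posPart.rnDeriv volume x).toReal) p volume

namespace MeasureTheory

variable {α : Type*} [MeasurableSpace α]

namespace SignedMeasure

lemma apply_le_real_posPart (s : SignedMeasure α) {E : Set α} (hE : MeasurableSet E) :
    s E ≤ s.toJordanDecomposition.posPart.real E := by
  rw [s.apply_eq_posPart_real_sub_negPart_real hE]
  exact sub_le_self _ measureReal_nonneg

lemma toJordanDecomposition_posPart_le (s : SignedMeasure α) (P : Measure α)
    [IsFiniteMeasure P] (h : ∀ E, MeasurableSet E → s E ≤ P.real E) :
    s.toJordanDecomposition.posPart ≤ P := by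
  obtain ⟨i, hi, hi₀, -, hpos, -⟩ := s.toJordanDecomposition_spec
  refine Measure.le_iff.2 fun E hE => ?_
  rw [hpos, toMeasureOfZeroLE_apply _ hi₀ hi hE, ← ENNReal.ofReal_eq_coe_nnreal]
  calc ENNReal.ofReal (s (i ∩ E)) ≤ ENNReal.ofReal (P.real (i ∩ E)) :=
        ENNReal.ofReal_le_ofReal (h _ (hi.inter hE))
    _ = P (i ∩ E) := ENNReal.ofReal_toReal (measure_ne_top _ _)
    _ ≤ P E := measure_mono inter_subset_right

lemma toJordanDecomposition_posPart_add_le (s t : SignedMeasure α) (Q : Measure α)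
    [IsFiniteMeasure Q] (ht : ∀ E, MeasurableSet E → t E ≤ Q.real E) :
    (s + t).toJordanDecomposition.posPart ≤ s.toJordanDecomposition.posPart + Q :=
  toJordanDecomposition_posPart_le _ _ fun E hE => by
    rw [add_apply, measureReal_add_apply]
    exact add_le_add (s.apply_le_real_posPart hE) (ht E hE)

end SignedMeasure

lemma withDensityᵥ_apply_le_real_withDensity_ofReal (μ : Measure α) (f : α → ℝ)
    {E : Set α} (hE : MeasurableSet E) :
    μ.withDensityᵥ f E ≤ (μ.withDensity fun x => ENNReal.ofReal (f x)).real E := by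
  by_cases hf : Integrable f μ
  · rw [withDensityᵥ_apply hf hE, measureReal_def, withDensity_apply _ hE,
      integral_eq_lintegral_pos_part_sub_lintegral_neg_part hf.restrict]
    exact sub_le_self _ ENNReal.toReal_nonneg
  · rw [Measure.withDensityᵥ, dif_neg hf]
    exact measureReal_nonneg

namespace Measure

variable {m P Q ν : Measure α} [SigmaFinite ν]

lemma rnDeriv_le_rnDeriv_of_le [HaveLebesgueDecomposition m ν] [HaveLebesgueDecomposition P ν]
    (hle : m ≤ P) (hP : P ≪ ν) : m.rnDeriv ν ≤ᵐ[ν] P.rnDeriv ν := by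
  refine ae_le_of_forall_setLIntegral_le_of_sigmaFinite₀
    (measurable_rnDeriv m ν).aemeasurable fun E _ _ => ?_
  rw [setLIntegral_rnDeriv ((absolutelyContinuous_of_le hle).trans hP),
    setLIntegral_rnDeriv hP]
  exact hle E

variable [IsFiniteMeasure m] [IsFiniteMeasure P] [IsFiniteMeasure Q]

lemma norm_toReal_rnDeriv_le_add (hle : m ≤ P + Q) (hP : P ≪ ν) (hQ : Q ≪ ν) :
    ∀ᵐ x ∂ν, ‖(m.rnDeriv ν x).toReal‖ ≤ (P.rnDeriv ν x).toReal + (Q.rnDeriv ν x).toReal := by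
  filter_upwards [rnDeriv_le_rnDeriv_of_le hle (hP.add_left hQ), rnDeriv_add P Q ν,
    rnDeriv_lt_top P ν, rnDeriv_lt_top Q ν] with x hle_x hadd hPx hQx
  rw [Real.norm_of_nonneg ENNReal.toReal_nonneg, ← ENNReal.toReal_add hPx.ne hQx.ne]
  exact ENNReal.toReal_mono (ENNReal.add_ne_top.2 ⟨hPx.ne, hQx.ne⟩) (hle_x.trans_eq hadd)

lemma memLp_toReal_rnDeriv_of_le_add {p : ℝ≥0∞} (hle : m ≤ P + Q) (hP : P ≪ ν) (hQ : Q ≪ ν)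
    (hPp : MemLp (fun x => (P.rnDeriv ν x).toReal) p ν)
    (hQp : MemLp (fun x => (Q.rnDeriv ν x).toReal) p ν) :
    MemLp (fun x => (m.rnDeriv ν x).toReal) p ν :=
  (hPp.add hQp).of_le (measurable_rnDeriv m ν).ennreal_toReal.aestronglyMeasurable <|
    (norm_toReal_rnDeriv_le_add hle hP hQ).mono fun _ hx => hx.trans (le_abs_self _)

lemma eLpNorm_toReal_rnDeriv_le_add {p : ℝ≥0∞} (hp : 1 ≤ p) (hle : m ≤ P + Q) (hP : P ≪ ν)
    (hQ : Q ≪ ν) :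
    eLpNorm (fun x => (m.rnDeriv ν x).toReal) p ν ≤
      eLpNorm (fun x => (P.rnDeriv ν x).toReal) p ν +
        eLpNorm (fun x => (Q.rnDeriv ν x).toReal) p ν :=
  (eLpNorm_mono_ae_real (norm_toReal_rnDeriv_le_add hle hP hQ)).trans <|
    eLpNorm_add_le (measurable_rnDeriv P ν).ennreal_toReal.aestronglyMeasurable
      (measurable_rnDeriv Q ν).ennreal_toReal.aestronglyMeasurable hp

end Measure

lemma restrict_withDensity_absolutelyContinuous (ρ : Measure α) (Ω : Set α) (g : α → ℝ≥0∞) :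
    (ρ.restrict Ω).withDensity g ≪ ρ :=
  (withDensity_absolutelyContinuous _ g).trans (Measure.absolutelyContinuous_of_le
    Measure.restrict_le_self)

section RestrictWithDensity

variable {ρ : Measure α} [SigmaFinite ρ] {Ω : Set α} {f : α → ℝ}

lemma toReal_rnDeriv_restrict_withDensity_ofReal (hΩ : MeasurableSet Ω)
    (hf : AEMeasurable f (ρ.restrict Ω)) :
    (fun x => (((ρ.restrict Ω).withDensity fun y => ENNReal.ofReal (f y)).rnDeriv ρ x).toReal)
      =ᵐ[ρ] Ω.indicator fun x => max (f x) 0 := by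
  rw [← withDensity_indicator hΩ]
  have hind : AEMeasurable (Ω.indicator fun x => ENNReal.ofReal (f x)) ρ :=
    (aemeasurable_indicator_iff hΩ).2 (ENNReal.measurable_ofReal.comp_aemeasurable hf)
  filter_upwards [Measure.rnDeriv_withDensity₀ ρ hind] with x hx
  rw [hx]
  by_cases hx : x ∈ Ω
  · simp only [indicator_of_mem hx, ENNReal.toReal_ofReal']
  · simp [indicator_of_notMem hx]

lemma memLp_toReal_rnDeriv_restrict_withDensity_ofReal {p : ℝ≥0∞} (hΩ : MeasurableSet Ω)
    (hf : MemLp f p (ρ.restrict Ω)) :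
    MemLp (fun x =>
      (((ρ.restrict Ω).withDensity fun y => ENNReal.ofReal (f y)).rnDeriv ρ x).toReal) p ρ :=
  ((memLp_indicator_iff_restrict hΩ).2 hf.pos_part).ae_eq
    (toReal_rnDeriv_restrict_withDensity_ofReal hΩ hf.aestronglyMeasurable.aemeasurable).symm

lemma eLpNorm_toReal_rnDeriv_restrict_withDensity_ofReal {p : ℝ≥0∞} (hΩ : MeasurableSet Ω)
    (hf : AEMeasurable f (ρ.restrict Ω)) :
    eLpNorm (fun x =>
        (((ρ.restrict Ω).withDensity fun y => ENNReal.ofReal (f y)).rnDeriv ρ x).toReal) p ρ =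
      eLpNorm (fun x => max (f x) 0) p (ρ.restrict Ω) := by
  rw [eLpNorm_congr_ae (toReal_rnDeriv_restrict_withDensity_ofReal hΩ hf),
    eLpNorm_indicator_eq_eLpNorm_restrict hΩ]

end RestrictWithDensity

end MeasureTheory

theorem posPart_measure_add_density_general {n : ℕ}
    (Ω : Set (EuclideanSpace ℝ (Fin n))) (hΩmeas : MeasurableSet Ω)
    (p : ℝ≥0∞) (hp : 1 ≤ p)
    (μ : MeasureTheory.SignedMeasure (EuclideanSpace ℝ (Fin n)))
    (ζ : EuclideanSpace ℝ (Fin n) → ℝ)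
    (hζ : MemLp ζ p (volume.restrict Ω))
    (hζint : Integrable ζ (volume.restrict Ω)) :
    (posPartInLp μ p ↔ posPartInLp (μ + (volume.restrict Ω).withDensityᵥ ζ) p) ∧
    (posPartInLp μ p →
      eLpNorm (fun x =>
          (((μ + (volume.restrict Ω).withDensityᵥ ζ).toJordanDecomposition.posPart).rnDeriv
            volume x).toReal) p volume
        ≤ eLpNorm (fun x => (μ.toJordanDecomposition.posPart.rnDeriv volume x).toReal) p volume
          + eLpNorm (fun x => max (ζ x) 0) p (volume.restrict Ω)) := by
  set w := (volume.restrict Ω).withDensityᵥ ζ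
  have := isFiniteMeasure_withDensity_ofReal hζint.hasFiniteIntegral
  have := isFiniteMeasure_withDensity_ofReal hζint.neg.hasFiniteIntegral
  have hac := restrict_withDensity_absolutelyContinuous volume Ω
  have hfwd := μ.toJordanDecomposition_posPart_add_le w _
    fun E hE => withDensityᵥ_apply_le_real_withDensity_ofReal _ ζ hE
  have hbwd : μ.toJordanDecomposition.posPart ≤ (μ + w).toJordanDecomposition.posPart +
      (volume.restrict Ω).withDensity fun x => ENNReal.ofReal (-ζ x) := by
    simpa using (μ + w).toJordanDecomposition_posPart_add_le (-w) _ fun E hE => by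
      rw [← withDensityᵥ_neg]; exact withDensityᵥ_apply_le_real_withDensity_ofReal _ (-ζ) hE
  refine ⟨⟨fun h => ⟨?_, ?_⟩, fun h => ⟨?_, ?_⟩⟩, fun h => ?_⟩
  · exact (Measure.absolutelyContinuous_of_le hfwd).trans (h.1.add_left (hac _))
  · exact Measure.memLp_toReal_rnDeriv_of_le_add hfwd h.1 (hac _) h.2
      (memLp_toReal_rnDeriv_restrict_withDensity_ofReal hΩmeas hζ)
  · exact (Measure.absolutelyContinuous_of_le hbwd).trans (h.1.add_left (hac _))
  · exact Measure.memLp_toReal_rnDeriv_of_le_add hbwd h.1 (hac _) h.2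
      (memLp_toReal_rnDeriv_restrict_withDensity_ofReal hΩmeas hζ.neg)
  · rw [← eLpNorm_toReal_rnDeriv_restrict_withDensity_ofReal hΩmeas
      hζ.aestronglyMeasurable.aemeasurable]
    exact Measure.eLpNorm_toReal_rnDeriv_le_add hp hfwd h.1 (hac _)

/-- Lemma A.1: for a signed Radon measure `μ` supported in the closure of a bounded
set `Ω` and `ζ ∈ L^p(Ω)`, `μ₊ ∈ L^p` iff `(μ + ζ dx)₊ ∈ L^p`, with the norm bound
`‖(μ+ζ)₊‖_{L^p} ≤ ‖μ₊‖_{L^p} + ‖ζ₊‖_{L^p}`. -/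
theorem posPart_measure_add_density {n : ℕ}
    (Ω : Set (EuclideanSpace ℝ (Fin n))) (hΩmeas : MeasurableSet Ω)
    (hΩbdd : Bornology.IsBounded Ω)
    (p : ℝ≥0∞) (hp : 1 ≤ p)
    (μ : MeasureTheory.SignedMeasure (EuclideanSpace ℝ (Fin n)))
    -- μ is carried by the closure of Ω
    (hμsupp : μ.toJordanDecomposition.posPart (closure Ω)ᶜ = 0 ∧
      μ.toJordanDecomposition.negPart (closure Ω)ᶜ = 0)
    (ζ : EuclideanSpace ℝ (Fin n) → ℝ)
    (hζ : MemLp ζ p (volume.restrict Ω))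
    (hζint : Integrable ζ (volume.restrict Ω)) :
    (posPartInLp μ p ↔ posPartInLp (μ + (volume.restrict Ω).withDensityᵥ ζ) p) ∧
    (posPartInLp μ p →
      eLpNorm (fun x =>
          (((μ + (volume.restrict Ω).withDensityᵥ ζ).toJordanDecomposition.posPart).rnDeriv
            volume x).toReal) p volume
        ≤ eLpNorm (fun x => (μ.toJordanDecomposition.posPart.rnDeriv volume x).toReal) p volume
          + eLpNorm (fun x => max (ζ x) 0) p (volume.restrict Ω)) :=
  posPart_measure_add_density_general Ω hΩmeas p hp μ ζ hζ hζint
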